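/- With notation as above (f ∈ O_K[τ] with unit top coefficient and degree d > 0, f̄ its residual polynomial lifted to O_K via k ↪ O_K, and x the unique solution of f x = x f̄ with x ≡ 1 mod m_K), one has v(x - 1) ≥ v(f - f̄) > 0, where for a twisted series y = ∑ y_i τ^i one sets v(y) := inf_i v(y_i). -/

import Mathlib

/-!
Write `x = 1 + y` and suppose every `y_j` has valuation at least `t`, where `0 < t < c` and
`c ≤ v(f - f̄)`. In degree `t` each `f_i` may then be replaced by its constant term `f̄_i`, and
for `i ≥ 1` the power `y_j ^ p^i`, of valuation at least `p^i t > t`, does not contribute. So the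
degree-`t` part of the `τ^(d-m)`-coefficient of `f x - x f̄` is `-σ^(-m)(f̄_d) (y_m)_t` plus terms
in `(y_j)_t` with `j < m` (here `d > 0` is used; `σ` is the Frobenius of `k`). As `f̄_d ≠ 0`,
induction on `m` gives `(y_m)_t = 0` for all `m`, and induction on `t` gives `v(y) ≥ c`.
-/

-- `x n` is the coefficient of `τ^(-n)`, and `conjEqCoeff p d f x m` is the coefficient of
-- `τ^(d-m)` in `f x - x f̄`, computed with `τ^(-j) a = a^(p^(-j)) τ^(-j)`.
noncomputable def conjEqCoeff (p : ℕ) [Fact p.Prime] {k : Type*} [Field k] [Fintype k]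
    [CharP k p] (d : ℕ) (f : ℕ → LaurentSeries k) (x : ℕ → LaurentSeries k) (m : ℕ) :
    LaurentSeries k :=
  ∑ i ∈ (Finset.range (d + 1)).filter (fun i => d ≤ m + i),
    (f i * (x (m + i - d)) ^ (p ^ i) -
      x (m + i - d) * HahnSeries.C ((⇑(frobeniusEquiv k p).symm)^[m + i - d] ((f i).coeff 0)))

open HahnSeries

instance HahnSeries.charP {Γ R : Type*} [AddCommMonoid Γ] [PartialOrder Γ]
    [IsOrderedCancelAddMonoid Γ] [Semiring R] (p : ℕ) [CharP R p] : CharP R⟦Γ⟧ p :=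
  charP_of_injective_ringHom C_injective p

namespace LaurentSeries

variable {R : Type*}

theorem orderTop_sub_C_coeff_zero_pos [Ring R] {F : LaurentSeries R} (hF : 0 ≤ F.orderTop) :
    0 < (F - C (F.coeff 0)).orderTop := by
  refine zero_lt_one.trans_le (le_orderTop_iff_forall.2 fun j hj => ?_)
  have hj : j ≤ 0 := Order.le_of_lt_add_one (by exact_mod_cast hj : j < 0 + 1)
  rcases hj.lt_or_eq with hneg | rfl
  · rw [coeff_sub, coeff_eq_zero_of_lt_orderTop ((WithTop.coe_lt_coe.2 hneg).trans_le hF),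
      C_apply, coeff_single_of_ne hneg.ne, sub_zero]
  · simp

theorem coeff_mul_eq_coeff_zero_mul [Ring R] {F z : LaurentSeries R} {t : ℤ}
    (hF : (t : WithTop ℤ) < (F - C (F.coeff 0)).orderTop) (hz : 0 ≤ z.orderTop) :
    (F * z).coeff t = F.coeff 0 * z.coeff t := by
  have hrest : ((F - C (F.coeff 0)) * z).coeff t = 0 :=
    coeff_eq_zero_of_lt_orderTop <|
      (hF.trans_le (le_add_of_nonneg_right hz)).trans_le orderTop_add_le_mul
  rw [← sub_add_cancel F (C (F.coeff 0)), add_mul, coeff_add, hrest, zero_add, C_mul_eq_smul,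
    coeff_smul, smul_eq_mul, sub_add_cancel]

theorem coeff_pow_eq_zero_of_le_orderTop [Semiring R] {w : LaurentSeries R} {t : ℤ} (ht : 0 < t)
    (hw : (t : WithTop ℤ) ≤ w.orderTop) {n : ℕ} (hn : 2 ≤ n) : (w ^ n).coeff t = 0 := by
  refine coeff_eq_zero_of_lt_orderTop (lt_of_lt_of_le ?_ orderTop_nsmul_le_orderTop_pow)
  calc (t : WithTop ℤ) < ((n • t : ℤ) : WithTop ℤ) := by
        rw [WithTop.coe_lt_coe, nsmul_eq_mul]; nlinarith
    _ = n • (t : WithTop ℤ) := WithTop.coe_nsmul t n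
    _ ≤ n • w.orderTop := by gcongr

theorem coeff_mul_pow_char_pow_sub_mul_C [CommRing R] {p : ℕ} [Fact p.Prime] [CharP R p]
    {F z : LaurentSeries R} {e b : R} {t : ℤ} (ht : 0 < t)
    (hz : (t : WithTop ℤ) ≤ (z - C e).orderTop)
    (hF : (t : WithTop ℤ) < (F - C (F.coeff 0)).orderTop) (i : ℕ) :
    (F * z ^ p ^ i - z * C b).coeff t =
      ((if i = 0 then F.coeff 0 else 0) - b) * (z - C e).coeff t := by
  obtain ⟨w, rfl⟩ : ∃ w, z = C e + w := ⟨z - C e, by ring⟩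
  rw [add_sub_cancel_left] at hz ⊢
  have hC : ∀ a : R, (C a).coeff t = 0 := fun a => coeff_single_of_ne ht.ne'
  have hw_nonneg : 0 ≤ w.orderTop := (WithTop.coe_nonneg.2 ht.le).trans hz
  have hpow_nonneg : 0 ≤ (C (e ^ p ^ i) + w ^ p ^ i).orderTop :=
    (le_min orderTop_single_le ((nsmul_nonneg hw_nonneg _).trans
      orderTop_nsmul_le_orderTop_pow)).trans min_orderTop_le_orderTop_add
  have hpow_coeff : (w ^ p ^ i).coeff t = if i = 0 then w.coeff t else 0 := by
    rcases eq_or_ne i 0 with rfl | hi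
    · simp
    · rw [if_neg hi]
      exact coeff_pow_eq_zero_of_le_orderTop ht hz
        (Nat.one_lt_pow hi (Fact.out : p.Prime).one_lt)
  rw [coeff_sub, add_pow_char_pow, ← map_pow, coeff_mul_eq_coeff_zero_mul hF hpow_nonneg,
    C_apply b, coeff_mul_single_zero, coeff_add, coeff_add, hC, hC, hpow_coeff]
  split_ifs <;> ring

theorem le_orderTop_of_orderTop_pos_of_coeff_eq_zero {ι : Type*} [Semiring R]
    {y : ι → LaurentSeries R} {c : WithTop ℤ} (hpos : ∀ n, 0 < (y n).orderTop)
    (hstep : ∀ t : ℤ, 0 < t → ↑t < c → (∀ n, (t : WithTop ℤ) ≤ (y n).orderTop) →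
      ∀ n, (y n).coeff t = 0)
    (n : ι) : c ≤ (y n).orderTop := by
  suffices h : ∀ N : ℕ, ∀ t : ℤ, t.toNat = N → ↑t < c → ∀ n, (y n).coeff t = 0 from
    le_orderTop_iff_forall.2 fun t ht => h _ t rfl ht n
  intro N
  induction N using Nat.strong_induction_on with
  | _ N ih =>
    intro t htN htc
    rcases le_or_gt t 0 with ht | ht
    · exact fun n => coeff_eq_zero_of_lt_orderTop ((WithTop.coe_le_coe.2 ht).trans_lt (hpos n))
    · refine hstep t ht htc fun n => le_orderTop_iff_forall.2 fun s hs => ?_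
      have hst : s < t := by exact_mod_cast hs
      exact ih s.toNat (by omega) s rfl (hs.trans htc) n

end LaurentSeries

theorem coeff_sub_C_eq_zero_of_conjEqCoeff_eq_zero (p : ℕ) [Fact p.Prime] {k : Type*} [Field k]
    [Fintype k] [CharP k p] {d : ℕ} (hd : 0 < d) {f x : ℕ → LaurentSeries k}
    (hconj : ∀ m, conjEqCoeff p d f x m = 0) (hlead : (f d).coeff 0 ≠ 0) (e : ℕ → k) {t : ℤ}
    (ht : 0 < t) (hf : ∀ i, (t : WithTop ℤ) < (f i - C ((f i).coeff 0)).orderTop)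
    (hx : ∀ n, (t : WithTop ℤ) ≤ (x n - C (e n)).orderTop) (m : ℕ) :
    (x m - C (e m)).coeff t = 0 := by
  induction m using Nat.strong_induction_on with
  | _ m ih =>
    have hsum := congrArg (coeff · t) (hconj m)
    simp only [conjEqCoeff, coeff_sum, coeff_zero,
      LaurentSeries.coeff_mul_pow_char_pow_sub_mul_C ht (hx _) (hf _)] at hsum
    rw [Finset.sum_eq_single_of_mem d (by simp) fun i hi hid => by
      rw [ih _ (by simp at hi; omega), mul_zero]] at hsum
    have hσ : (⇑(frobeniusEquiv k p).symm)^[m] ((f d).coeff 0) ≠ 0 :=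
      ((frobeniusEquiv k p).symm.injective.iterate m).ne_iff'
        (Function.iterate_fixed (map_zero _) m) |>.2 hlead
    simpa [hd.ne', hσ] using hsum

theorem conjugating_series_valuation_bound
    (p : ℕ) [Fact p.Prime] (k : Type*) [Field k] [Fintype k] [CharP k p]
    (d : ℕ) (hd : 0 < d) (f : ℕ → LaurentSeries k)
    (hint : ∀ i, 0 ≤ (f i).orderTop)
    (hunit : (f d).orderTop = 0)
    (x : ℕ → LaurentSeries k)
    (hx0 : 0 < (x 0 - 1).orderTop) (hxpos : ∀ n, 0 < n → 0 < (x n).orderTop)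
    (hconj : ∀ m : ℕ, conjEqCoeff p d f x m = 0) :
    (∀ i, 0 < (f i - HahnSeries.C ((f i).coeff 0)).orderTop) ∧
      ∀ c : WithTop ℤ,
        (∀ i, c ≤ (f i - HahnSeries.C ((f i).coeff 0)).orderTop) →
        c ≤ (x 0 - 1).orderTop ∧ ∀ n, 0 < n → c ≤ (x n).orderTop := by
  refine ⟨fun i => LaurentSeries.orderTop_sub_C_coeff_zero_pos (hint i), fun c hc => ?_⟩
  let e : ℕ → k := fun n => if n = 0 then 1 else 0
  have hpos : ∀ n, 0 < (x n - C (e n)).orderTop := by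
    rintro (_ | n)
    · simpa [e] using hx0
    · simpa [e] using hxpos (n + 1) n.succ_pos
  have hbound := LaurentSeries.le_orderTop_of_orderTop_pos_of_coeff_eq_zero hpos
    fun t ht htc hx => coeff_sub_C_eq_zero_of_conjEqCoeff_eq_zero p hd hconj
      (coeff_orderTop_ne hunit) e ht (fun i => htc.trans_le (hc i)) hx
  exact ⟨by simpa [e] using hbound 0, fun n hn => by simpa [e, hn.ne'] using hbound n⟩
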